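/- Let σ ∈ S_{n+1} be an (n+1)-cycle and let H ≤ S_{n+1} be a subgroup generated by transpositions. If σ ∈ H then H = S_{n+1}. Hence a Coxeter element of the symmetric group S_{n+1} is not contained in any proper reflection subgroup. -/

import Mathlib

/-! A subgroup generated by transpositions is the whole symmetric group as soon as it acts
transitively (`Equiv.Perm.closure_of_isSwap_of_isPretransitive`), and a cycle moving every point
already acts transitively through its powers. -/

namespace Equiv.Perm

theorem IsCycle.isPretransitive_of_mem {α : Type*} {σ : Perm α} (hσ : σ.IsCycle)
    (hfull : ∀ x, σ x ≠ x) {H : Subgroup (Perm α)} (hmem : σ ∈ H) :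
    MulAction.IsPretransitive H α where
  exists_smul_eq x y := by
    obtain ⟨i, hi⟩ := hσ.sameCycle (hfull x) (hfull y)
    exact ⟨⟨σ ^ i, H.zpow_mem hmem i⟩, hi⟩

end Equiv.Perm

theorem stmt_16 {n : ℕ} (σ : Equiv.Perm (Fin (n + 1)))
    (hσ : σ.IsCycle) (hlen : σ.support.card = n + 1)
    (H : Subgroup (Equiv.Perm (Fin (n + 1))))
    (hgen : ∃ S : Set (Equiv.Perm (Fin (n + 1))), (∀ τ ∈ S, τ.IsSwap) ∧
      H = Subgroup.closure S)
    (hmem : σ ∈ H) :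
    H = ⊤ := by
  obtain ⟨S, hS, rfl⟩ := hgen
  have hsupport : σ.support = Finset.univ :=
    Finset.eq_univ_of_card _ (by rw [hlen, Fintype.card_fin])
  have hfull (x : Fin (n + 1)) : σ x ≠ x :=
    Equiv.Perm.mem_support.mp (hsupport ▸ Finset.mem_univ x)
  have := hσ.isPretransitive_of_mem hfull hmem
  exact closure_of_isSwap_of_isPretransitive hS
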